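/- Let {X_{n,i}, 1 ≤ i ≤ n, n ≥ 1} be an array of random variables and G(x) = sup_{n≥1} (1/n) Σ_{i=1}^n P(|X_{n,i}| > x). Let {b_n, n ≥ 1} be a nondecreasing sequence of positive real numbers satisfying Σ_{i=1}^n b_i/i² = O(b_n/n). Let {c_{n,i}, 1 ≤ i ≤ n, n ≥ 1} be an array of nonnegative real numbers satisfying 0 < A_n := Σ_{i=1}^n c_{n,i} ≤ C n for all n ≥ 1 and some constant C, set a_{n,i} = c_{n,i}/A_n, and let Ĝ(x) = sup_{n≥1} Σ_{i=1}^n a_{n,i} P(|X_{n,i}| > x). If lim_{k→∞} k·G(b_k) = 0 and lim_{k→∞} k·Ĝ(b_k) = 0, then (1/b_n) max_{j≤n} |Σ_{i=1}^j c_{n,i} X_{n,i}| → 0 in probability as n → ∞. -/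

import Mathlib

open MeasureTheory Filter Set Topology

/-!
Truncate row `n` at level `b n`. Off the event that some `|X n i| > b n`, whose probability is at
most `n G(b n)`, every partial sum is bounded by `Σ c n i min(|X n i|, b n)`, so Markov's
inequality bounds the remaining probability by `E Σ c n i min(|X n i|, b n) / (ε b n)`. The
pointwise bound `min(x, b n) ≤ b 1 + Σ_{1 ≤ k < n} (b (k+1) - b k) 1{x > b k}` turns this
expectation into at most `A n (b 1 + Σ_{1 ≤ k < n} (b (k+1) - b k) Ĝ(b k))`.

The growth condition on `b` gives `b n / n ≳ log n`, hence `n / b n → 0`, and by Abel summation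
`Σ_{1 ≤ k < n} (b (k+1) - b k) / k = O(b n / n)`. Since `k Ĝ(b k) → 0`, a Toeplitz argument
then makes `(n / b n) Σ_{1 ≤ k < n} (b (k+1) - b k) Ĝ(b k) → 0`, and `A n ≤ C n` concludes.
-/

theorem sum_Ico_sub_div_add_eq (b : ℕ → ℝ) {n : ℕ} (hn : 1 ≤ n) :
    ∑ k ∈ Finset.Ico 1 n, (b (k + 1) - b k) / k + b 1 =
      b n / n + ∑ k ∈ Finset.Ioc 1 n, b k / ((k : ℝ) * (k - 1)) := by
  induction n, hn using Nat.le_induction with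
  | base => simp
  | succ n hn ih =>
    rw [Finset.sum_Ico_succ_top hn, Finset.sum_Ioc_succ_top hn]
    have hsplit :
        b (n + 1) / ((n : ℝ) + 1) + b (n + 1) / (((n : ℝ) + 1) * ((n : ℝ) + 1 - 1)) =
          b (n + 1) / n := by
      rw [add_sub_cancel_right]
      field_simp
    push_cast
    rw [sub_div]
    linarith

theorem sum_Ico_sub_div_le {b : ℕ → ℝ} (hbpos : ∀ n, 1 ≤ n → 0 < b n) {C : ℝ}
    (hC : ∀ n, 1 ≤ n → ∑ i ∈ Finset.Icc 1 n, b i / (i : ℝ) ^ 2 ≤ C * (b n / n))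
    {n : ℕ} (hn : 1 ≤ n) :
    ∑ k ∈ Finset.Ico 1 n, (b (k + 1) - b k) / k ≤ (1 + 2 * C) * (b n / n) := by
  have hterm : ∀ k ∈ Finset.Ioc 1 n,
      b k / ((k : ℝ) * (k - 1)) ≤ 2 * (b k / (k : ℝ) ^ 2) := by
    intro k hk
    have hk2 : 2 ≤ k := (Finset.mem_Ioc.mp hk).1
    have hk2' : (2 : ℝ) ≤ k := by exact_mod_cast hk2
    calc b k / ((k : ℝ) * (k - 1)) ≤ b k / ((k : ℝ) ^ 2 / 2) :=
          div_le_div_of_nonneg_left (hbpos k (by omega)).le (by positivity) (by nlinarith)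
      _ = 2 * (b k / (k : ℝ) ^ 2) := by ring
  have hsub : ∑ k ∈ Finset.Ioc 1 n, b k / (k : ℝ) ^ 2 ≤
      ∑ k ∈ Finset.Icc 1 n, b k / (k : ℝ) ^ 2 :=
    Finset.sum_le_sum_of_subset_of_nonneg Finset.Ioc_subset_Icc_self
      fun k hk _ => div_nonneg (hbpos k (Finset.mem_Icc.mp hk).1).le (sq_nonneg _)
  have habel := sum_Ico_sub_div_add_eq b hn
  have hsum := Finset.sum_le_sum hterm
  rw [← Finset.mul_sum] at hsum
  linarith [hbpos 1 le_rfl, hC n hn]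

theorem tendsto_natCast_div_of_sum_div_sq_le {b : ℕ → ℝ} (hbpos : ∀ n, 1 ≤ n → 0 < b n)
    {C : ℝ}
    (hC : ∀ n, 1 ≤ n → ∑ i ∈ Finset.Icc 1 n, b i / (i : ℝ) ^ 2 ≤ C * (b n / n)) :
    Tendsto (fun n : ℕ => (n : ℝ) / b n) atTop (𝓝 0) := by
  have hb1 := hbpos 1 le_rfl
  have hfirst : ∀ n : ℕ, 1 ≤ n → b 1 ≤ C * (b n / n) := fun n hn => by
    simpa using (Finset.single_le_sum (fun i hi => div_nonneg
      (hbpos i (Finset.mem_Icc.mp hi).1).le (sq_nonneg (i : ℝ)))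
      (Finset.left_mem_Icc.mpr hn)).trans (hC n hn)
  have hCpos : 0 < C := by
    have := hfirst 1 le_rfl
    norm_num at this
    nlinarith
  have hharm : Tendsto (fun n : ℕ => ∑ i ∈ Finset.Icc 1 n, 1 / (i : ℝ)) atTop atTop := by
    refine Real.tendsto_sum_range_one_div_nat_succ_atTop.congr fun n => ?_
    induction n with
    | zero => simp
    | succ n ih =>
      rw [Finset.sum_range_succ, ih, Finset.sum_Icc_succ_top (by omega)]
      push_cast
      rfl
  -- `b 1 ≤ C b_i / i` makes `Σ b_i / i²` dominate a multiple of the harmonic sum.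
  have hlower : ∀ n : ℕ, 1 ≤ n →
      b 1 / C ^ 2 * ∑ i ∈ Finset.Icc 1 n, 1 / (i : ℝ) ≤ b n / n := by
    intro n hn
    have hterm : ∀ i ∈ Finset.Icc 1 n, b 1 / C * (1 / (i : ℝ)) ≤ b i / (i : ℝ) ^ 2 := by
      intro i hi
      have hi : 0 < (i : ℝ) := by exact_mod_cast (Finset.mem_Icc.mp hi).1
      calc b 1 / C * (1 / (i : ℝ)) ≤ b i / i * (1 / (i : ℝ)) := by
            refine mul_le_mul_of_nonneg_right ?_ (by positivity)
            rw [div_le_iff₀' hCpos]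
            exact hfirst i (by exact_mod_cast hi)
        _ = b i / (i : ℝ) ^ 2 := by ring
    have h := (Finset.sum_le_sum hterm).trans (hC n hn)
    rw [← Finset.mul_sum] at h
    rw [sq, ← div_div, div_mul_eq_mul_div, div_le_iff₀ hCpos]
    linarith
  have hdiv : Tendsto (fun n : ℕ => b n / n) atTop atTop :=
    tendsto_atTop_mono' atTop (eventually_atTop.mpr ⟨1, hlower⟩)
      (Tendsto.const_mul_atTop (by positivity : 0 < b 1 / C ^ 2) hharm)
  exact hdiv.inv_tendsto_atTop.congr fun n => inv_div _ _

theorem tendsto_mul_sum_Ico_of_tendsto_mul {w d g : ℕ → ℝ} {K : ℝ}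
    (hw : Tendsto w atTop (𝓝 0)) (hw0 : ∀ᶠ n in atTop, 0 ≤ w n)
    (hd : ∀ k, 1 ≤ k → 0 ≤ d k)
    (hK : ∀ᶠ n in atTop, w n * ∑ k ∈ Finset.Ico 1 n, d k / k ≤ K)
    (hg : Tendsto (fun k : ℕ => k * g k) atTop (𝓝 0)) :
    Tendsto (fun n => w n * ∑ k ∈ Finset.Ico 1 n, d k * g k) atTop (𝓝 0) := by
  rw [Metric.tendsto_nhds]
  intro η hη
  set δ := η / (2 * (|K| + 1))
  have hδ : 0 < δ := by positivity
  obtain ⟨N, hN⟩ := eventually_atTop.mp (Metric.tendsto_nhds.mp hg δ hδ)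
  set M := ∑ k ∈ Finset.Ico 1 (N + 1), |d k * g k|
  have hM : Tendsto (fun n => w n * M) atTop (𝓝 0) := by simpa using hw.mul_const M
  filter_upwards [Metric.tendsto_nhds.mp hM (η / 2) (by positivity), hw0, hK,
    eventually_ge_atTop (N + 1)] with n hMn hwn hKn hn
  rw [Real.dist_eq, sub_zero] at hMn ⊢
  -- Past `N`, each term is `(d k / k) * (k * g k)` with `|k * g k| < δ`.
  have htail : ∑ k ∈ Finset.Ico (N + 1) n, |d k * g k| ≤
      δ * ∑ k ∈ Finset.Ico 1 n, d k / k := by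
    rw [Finset.mul_sum]
    refine (Finset.sum_le_sum fun k hk => ?_).trans
      (Finset.sum_le_sum_of_subset_of_nonneg (Finset.Ico_subset_Ico_left (by omega))
        fun k hk _ => mul_nonneg hδ.le (div_nonneg (hd k (Finset.mem_Ico.mp hk).1) k.cast_nonneg))
    have hk : N + 1 ≤ k := (Finset.mem_Ico.mp hk).1
    have hkpos : (0 : ℝ) < k := Nat.cast_pos.mpr (by omega)
    have hgk := hN k (by omega)
    rw [Real.dist_eq, sub_zero, abs_mul, abs_of_nonneg hkpos.le] at hgk
    rw [abs_mul, abs_of_nonneg (hd k (by omega)), div_eq_mul_inv, mul_comm δ, mul_assoc]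
    refine mul_le_mul_of_nonneg_left ?_ (hd k (by omega))
    rw [le_inv_mul_iff₀ hkpos]
    exact hgk.le
  calc |w n * ∑ k ∈ Finset.Ico 1 n, d k * g k|
      ≤ w n * ∑ k ∈ Finset.Ico 1 n, |d k * g k| := by
        rw [abs_mul, abs_of_nonneg hwn]
        exact mul_le_mul_of_nonneg_left (Finset.abs_sum_le_sum_abs _ _) hwn
    _ = w n * M + w n * ∑ k ∈ Finset.Ico (N + 1) n, |d k * g k| := by
        rw [← mul_add, Finset.sum_Ico_consecutive _ (by omega) hn]
    _ ≤ |w n * M| + δ * (w n * ∑ k ∈ Finset.Ico 1 n, d k / k) := by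
        rw [mul_left_comm]
        exact add_le_add (le_abs_self _) (mul_le_mul_of_nonneg_left htail hwn)
    _ < η / 2 + η / 2 := by
        refine add_lt_add_of_lt_of_le hMn ((mul_le_mul_of_nonneg_left hKn hδ.le).trans ?_)
        calc δ * K ≤ δ * (|K| + 1) := by gcongr; linarith [le_abs_self K]
          _ = η / 2 := by simp only [δ]; field_simp
    _ = η := add_halves η

theorem tendsto_div_mul_sum_Ico_sub_mul {b : ℕ → ℝ} (hbpos : ∀ n, 1 ≤ n → 0 < b n)
    (hb : MonotoneOn b (Ici 1)) {C : ℝ}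
    (hC : ∀ n, 1 ≤ n → ∑ i ∈ Finset.Icc 1 n, b i / (i : ℝ) ^ 2 ≤ C * (b n / n))
    {g : ℕ → ℝ} (hg : Tendsto (fun k : ℕ => k * g k) atTop (𝓝 0)) :
    Tendsto (fun n : ℕ => n / b n * ∑ k ∈ Finset.Ico 1 n, (b (k + 1) - b k) * g k)
      atTop (𝓝 0) := by
  refine tendsto_mul_sum_Ico_of_tendsto_mul (K := 1 + 2 * C)
    (tendsto_natCast_div_of_sum_div_sq_le hbpos hC) ?_
    (fun k hk => sub_nonneg.mpr (hb hk (mem_Ici.mpr (by omega)) (by omega))) ?_ hg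
  · filter_upwards [eventually_ge_atTop 1] with n hn using
      div_nonneg n.cast_nonneg (hbpos n hn).le
  · filter_upwards [eventually_ge_atTop 1] with n hn
    have hbn := hbpos n hn
    calc n / b n * ∑ k ∈ Finset.Ico 1 n, (b (k + 1) - b k) / k
        ≤ n / b n * ((1 + 2 * C) * (b n / n)) :=
          mul_le_mul_of_nonneg_left (sum_Ico_sub_div_le hbpos hC hn) (by positivity)
      _ = 1 + 2 * C := by field_simp

theorem min_le_add_sum_Ico_indicator (b : ℕ → ℝ) (t : ℝ) {n : ℕ} (hn : 1 ≤ n) :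
    min t (b n) ≤
      b 1 + ∑ k ∈ Finset.Ico 1 n, (b (k + 1) - b k) * (Ioi (b k)).indicator 1 t := by
  induction n, hn using Nat.le_induction with
  | base => simp
  | succ n hn ih =>
    rw [Finset.sum_Ico_succ_top hn]
    by_cases h : b n < t
    · rw [min_eq_right h.le] at ih
      rw [indicator_of_mem (mem_Ioi.mpr h), Pi.one_apply, mul_one]
      linarith [min_le_right t (b (n + 1))]
    · rw [min_eq_left (not_lt.mp h)] at ih
      rw [indicator_of_notMem (notMem_Ioi.mpr (not_lt.mp h)), mul_zero]
      linarith [min_le_left t (b (n + 1))]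

theorem sup'_abs_sum_Icc_le {c : ℕ → ℝ} (hc : ∀ i, 0 ≤ c i) (x : ℕ → ℝ) (n : ℕ) :
    (Finset.range (n + 1)).sup' Finset.nonempty_range_add_one
      (fun j => |∑ i ∈ Finset.Icc 1 j, c i * x i|) ≤
      ∑ i ∈ Finset.Icc 1 n, c i * |x i| := by
  refine Finset.sup'_le _ _ fun j hj => ?_
  calc |∑ i ∈ Finset.Icc 1 j, c i * x i| ≤ ∑ i ∈ Finset.Icc 1 j, c i * |x i| := by
        simpa only [abs_mul, abs_of_nonneg (hc _)] using
          Finset.abs_sum_le_sum_abs (fun i => c i * x i) _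
    _ ≤ ∑ i ∈ Finset.Icc 1 n, c i * |x i| :=
        Finset.sum_le_sum_of_subset_of_nonneg
          (Finset.Icc_subset_Icc_right (Nat.lt_succ_iff.mp (Finset.mem_range.mp hj)))
          fun i _ _ => mul_nonneg (hc i) (abs_nonneg _)

section Probability

variable {Ω : Type*} [MeasurableSpace Ω] {μ : Measure Ω}

theorem integrable_min_abs [IsFiniteMeasure μ] {Y : Ω → ℝ} (hY : Measurable Y) (t : ℝ) :
    Integrable (fun ω => min |Y ω| t) μ :=
  Integrable.of_bound (hY.abs.min measurable_const).aestronglyMeasurable |t| <|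
    ae_of_all _ fun _ => abs_le.mpr
      ⟨le_min ((neg_nonpos.mpr (abs_nonneg t)).trans (abs_nonneg _)) (neg_abs_le t),
        (min_le_right _ _).trans (le_abs_self t)⟩

variable [IsProbabilityMeasure μ]

theorem integral_min_abs_le {Y : Ω → ℝ} (hY : Measurable Y) (b : ℕ → ℝ) {n : ℕ}
    (hn : 1 ≤ n) :
    ∫ ω, min |Y ω| (b n) ∂μ ≤
      b 1 + ∑ k ∈ Finset.Ico 1 n, (b (k + 1) - b k) * μ.real {ω | |Y ω| > b k} := by
  have hmeas : ∀ x, MeasurableSet {ω | |Y ω| > x} := fun x =>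
    measurableSet_lt measurable_const hY.abs
  have hind : ∀ k ∈ Finset.Ico 1 n,
      Integrable (fun ω => (b (k + 1) - b k) * {ω | |Y ω| > b k}.indicator 1 ω) μ :=
    fun k _ => ((integrable_const 1).indicator (hmeas (b k))).const_mul _
  calc ∫ ω, min |Y ω| (b n) ∂μ
      ≤ ∫ ω, b 1 + ∑ k ∈ Finset.Ico 1 n,
          (b (k + 1) - b k) * {ω | |Y ω| > b k}.indicator 1 ω ∂μ :=
        integral_mono (integrable_min_abs hY _)
          ((integrable_const _).add (integrable_finsetSum _ hind))
          fun ω => min_le_add_sum_Ico_indicator b |Y ω| hn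
    _ = b 1 + ∑ k ∈ Finset.Ico 1 n, (b (k + 1) - b k) * μ.real {ω | |Y ω| > b k} := by
        rw [integral_add (integrable_const _) (integrable_finsetSum _ hind), integral_const,
          integral_finsetSum _ hind]
        simp [integral_const_mul, integral_indicator_one (hmeas _)]

theorem measureReal_lt_sup'_abs_sum_le {Y : ℕ → Ω → ℝ} (hY : ∀ i, Measurable (Y i))
    {c : ℕ → ℝ} (hc : ∀ i, 0 ≤ c i) (n : ℕ) {s t : ℝ} (hs : 0 < s) (ht : 0 ≤ t) :
    μ.real {ω | s < (Finset.range (n + 1)).sup' Finset.nonempty_range_add_one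
        (fun j => |∑ i ∈ Finset.Icc 1 j, c i * Y i ω|)} ≤
      ∑ i ∈ Finset.Icc 1 n, μ.real {ω | |Y i ω| > t} +
        (∑ i ∈ Finset.Icc 1 n, c i * ∫ ω, min |Y i ω| t ∂μ) / s := by
  set g : Ω → ℝ := fun ω => ∑ i ∈ Finset.Icc 1 n, c i * min |Y i ω| t
  have hsub : {ω | s < (Finset.range (n + 1)).sup' Finset.nonempty_range_add_one
        (fun j => |∑ i ∈ Finset.Icc 1 j, c i * Y i ω|)} ⊆
      (⋃ i ∈ Finset.Icc 1 n, {ω | |Y i ω| > t}) ∪ {ω | s ≤ g ω} := by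
    intro ω hω
    by_cases hbig : ∃ i ∈ Finset.Icc 1 n, |Y i ω| > t
    · obtain ⟨i, hi, hgt⟩ := hbig
      exact Or.inl (mem_biUnion hi hgt)
    · right
      push Not at hbig
      refine hω.le.trans ((sup'_abs_sum_Icc_le hc (Y · ω) n).trans_eq ?_)
      exact Finset.sum_congr rfl fun i hi => by rw [min_eq_left (hbig i hi)]
  have hint : ∀ i ∈ Finset.Icc 1 n, Integrable (fun ω => c i * min |Y i ω| t) μ :=
    fun i _ => (integrable_min_abs (hY i) t).const_mul (c i)
  have hmarkov : s * μ.real {ω | s ≤ g ω} ≤ ∫ ω, g ω ∂μ :=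
    mul_meas_ge_le_integral_of_nonneg (ae_of_all _ fun ω =>
      Finset.sum_nonneg fun i _ => mul_nonneg (hc i) (le_min (abs_nonneg _) ht))
      (integrable_finsetSum _ hint) s
  rw [integral_finsetSum _ hint] at hmarkov
  simp only [integral_const_mul] at hmarkov
  calc _ ≤ μ.real ((⋃ i ∈ Finset.Icc 1 n, {ω | |Y i ω| > t}) ∪ {ω | s ≤ g ω}) :=
        measureReal_mono hsub
    _ ≤ μ.real (⋃ i ∈ Finset.Icc 1 n, {ω | |Y i ω| > t}) + μ.real {ω | s ≤ g ω} :=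
        measureReal_union_le _ _
    _ ≤ _ := add_le_add (measureReal_biUnion_finset_le _ _) (by rwa [le_div_iff₀' hs])

theorem sum_measureReal_le_mul_iSup (s : ℕ → ℕ → Set Ω) (n : ℕ) :
    ∑ i ∈ Finset.Icc 1 n, μ.real (s n i) ≤
      n * ⨆ m : ℕ, (1 / (m : ℝ)) * ∑ i ∈ Finset.Icc 1 m, μ.real (s m i) := by
  have hbdd : BddAbove
      (range fun m : ℕ => (1 / (m : ℝ)) * ∑ i ∈ Finset.Icc 1 m, μ.real (s m i)) := by
    refine ⟨1, forall_mem_range.mpr fun m => ?_⟩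
    have hsum : ∑ i ∈ Finset.Icc 1 m, μ.real (s m i) ≤ m := by
      simpa using
        Finset.sum_le_sum fun i (_ : i ∈ Finset.Icc 1 m) => measureReal_le_one (μ := μ)
    rcases m.eq_zero_or_pos with rfl | hm
    · simp
    · rw [one_div_mul_eq_div, div_le_one (Nat.cast_pos.mpr hm)]
      exact hsum
  rcases n.eq_zero_or_pos with rfl | hn
  · simp
  calc ∑ i ∈ Finset.Icc 1 n, μ.real (s n i)
      = n * ((1 / (n : ℝ)) * ∑ i ∈ Finset.Icc 1 n, μ.real (s n i)) := by
        rw [← mul_assoc, mul_one_div_cancel (Nat.cast_pos.mpr hn).ne', one_mul]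
    _ ≤ _ := mul_le_mul_of_nonneg_left (le_ciSup hbdd n) n.cast_nonneg

theorem sum_mul_measureReal_le_mul_iSup (s : ℕ → ℕ → Set Ω) {c : ℕ → ℕ → ℝ}
    (hc : ∀ n i, 0 ≤ c n i) {A : ℕ → ℝ}
    (hA : ∀ n, A n = ∑ i ∈ Finset.Icc 1 n, c n i)
    {n : ℕ} (hAn : 0 < A n) :
    ∑ i ∈ Finset.Icc 1 n, c n i * μ.real (s n i) ≤
      A n * ⨆ m : ℕ, ∑ i ∈ Finset.Icc 1 m, c m i / A m * μ.real (s m i) := by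
  have hbdd : BddAbove
      (range fun m : ℕ => ∑ i ∈ Finset.Icc 1 m, c m i / A m * μ.real (s m i)) := by
    refine ⟨1, forall_mem_range.mpr fun m => ?_⟩
    have hAm : 0 ≤ A m := (hA m).symm ▸ Finset.sum_nonneg fun i _ => hc m i
    calc ∑ i ∈ Finset.Icc 1 m, c m i / A m * μ.real (s m i)
        ≤ ∑ i ∈ Finset.Icc 1 m, c m i / A m :=
          Finset.sum_le_sum fun i _ =>
            mul_le_of_le_one_right (div_nonneg (hc m i) hAm) measureReal_le_one
      _ = A m / A m := by rw [← Finset.sum_div, hA]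
      _ ≤ 1 := div_self_le_one _
  calc ∑ i ∈ Finset.Icc 1 n, c n i * μ.real (s n i)
      = A n * ∑ i ∈ Finset.Icc 1 n, c n i / A n * μ.real (s n i) := by
        rw [Finset.mul_sum]
        exact Finset.sum_congr rfl fun i _ => by rw [← mul_assoc, mul_div_cancel₀ _ hAn.ne']
    _ ≤ _ := mul_le_mul_of_nonneg_left (le_ciSup hbdd n) hAn.le

theorem sum_mul_integral_min_abs_le {Y : ℕ → Ω → ℝ} (hY : ∀ i, Measurable (Y i))
    {c : ℕ → ℝ} (hc : ∀ i, 0 ≤ c i) {b : ℕ → ℝ} (hb : MonotoneOn b (Ici 1)) {n : ℕ}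
    (hn : 1 ≤ n)
    {g : ℕ → ℝ} (hg : ∀ k, ∑ i ∈ Finset.Icc 1 n, c i * μ.real {ω | |Y i ω| > b k} ≤
      (∑ i ∈ Finset.Icc 1 n, c i) * g k) :
    ∑ i ∈ Finset.Icc 1 n, c i * ∫ ω, min |Y i ω| (b n) ∂μ ≤
      (∑ i ∈ Finset.Icc 1 n, c i) *
        (b 1 + ∑ k ∈ Finset.Ico 1 n, (b (k + 1) - b k) * g k) := by
  have hd : ∀ k ∈ Finset.Ico 1 n, 0 ≤ b (k + 1) - b k := fun k hk => by
    have hk : 1 ≤ k := (Finset.mem_Ico.mp hk).1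
    exact sub_nonneg.mpr (hb (mem_Ici.mpr hk) (mem_Ici.mpr (by omega)) (by omega))
  calc ∑ i ∈ Finset.Icc 1 n, c i * ∫ ω, min |Y i ω| (b n) ∂μ
      ≤ ∑ i ∈ Finset.Icc 1 n, c i *
          (b 1 + ∑ k ∈ Finset.Ico 1 n, (b (k + 1) - b k) * μ.real {ω | |Y i ω| > b k}) :=
        Finset.sum_le_sum fun i _ =>
          mul_le_mul_of_nonneg_left (integral_min_abs_le (hY i) b hn) (hc i)
    _ = (∑ i ∈ Finset.Icc 1 n, c i) * b 1 + ∑ k ∈ Finset.Ico 1 n,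
          (b (k + 1) - b k) * ∑ i ∈ Finset.Icc 1 n, c i * μ.real {ω | |Y i ω| > b k} := by
        simp only [mul_add, Finset.sum_add_distrib, Finset.sum_mul, Finset.mul_sum]
        rw [Finset.sum_comm]
        simp only [mul_left_comm]
    _ ≤ (∑ i ∈ Finset.Icc 1 n, c i) * b 1 + ∑ k ∈ Finset.Ico 1 n,
          (b (k + 1) - b k) * ((∑ i ∈ Finset.Icc 1 n, c i) * g k) := by
        gcongr with k hk
        · exact hd k hk
        · exact hg k
    _ = _ := by
        rw [mul_add, Finset.mul_sum]
        simp only [mul_left_comm]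

end Probability

/-- WLLN for weighted sums: with `G(x) = sup_n (1/n) Σ P(|X_{n,i}| > x)`,
`b` nondecreasing positive with `Σ_{i=1}^n b_i/i² = O(b_n/n)`, nonnegative weights `c_{n,i}`
with `0 < A_n = Σ_{i=1}^n c_{n,i} ≤ C n`, `a_{n,i} = c_{n,i}/A_n` and
`Ĝ(x) = sup_n Σ a_{n,i} P(|X_{n,i}| > x)`, if `k G(b_k) → 0` and `k Ĝ(b_k) → 0` then
`(1/b_n) max_{j≤n} |Σ_{i=1}^j c_{n,i} X_{n,i}| → 0` in probability. -/
theorem statement15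
    {Ω : Type*} [MeasurableSpace Ω] (μ : Measure Ω) [IsProbabilityMeasure μ]
    (X : ℕ → ℕ → Ω → ℝ) (hXmeas : ∀ n i, Measurable (X n i))
    (G : ℝ → ℝ)
    (hG : ∀ x : ℝ, G x = ⨆ n : ℕ, (1 / (n : ℝ)) * ∑ i ∈ Finset.Icc 1 n,
      (μ {ω | |X n i ω| > x}).toReal)
    (b : ℕ → ℝ) (hbpos : ∀ n, 1 ≤ n → 0 < b n)
    (hbmono : ∀ m n, 1 ≤ m → m ≤ n → b m ≤ b n)
    (hbO : ∃ C : ℝ, ∀ n, 1 ≤ n →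
      ∑ i ∈ Finset.Icc 1 n, b i / (i : ℝ) ^ 2 ≤ C * (b n / (n : ℝ)))
    (c : ℕ → ℕ → ℝ) (hc : ∀ n i, 0 ≤ c n i)
    (A : ℕ → ℝ) (hA : ∀ n, A n = ∑ i ∈ Finset.Icc 1 n, c n i)
    (hApos : ∀ n, 1 ≤ n → 0 < A n)
    (hAbd : ∃ C : ℝ, ∀ n, 1 ≤ n → A n ≤ C * (n : ℝ))
    (Ghat : ℝ → ℝ)
    (hGhat : ∀ x : ℝ, Ghat x = ⨆ n : ℕ, ∑ i ∈ Finset.Icc 1 n,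
      (c n i / A n) * (μ {ω | |X n i ω| > x}).toReal)
    (hGb : Tendsto (fun k : ℕ => (k : ℝ) * G (b k)) atTop (nhds 0))
    (hGhatb : Tendsto (fun k : ℕ => (k : ℝ) * Ghat (b k)) atTop (nhds 0)) :
    ∀ ε : ℝ, 0 < ε → Tendsto (fun n : ℕ =>
      (μ {ω | (1 / b n) * (Finset.range (n + 1)).sup' Finset.nonempty_range_add_one
          (fun j => |∑ i ∈ Finset.Icc 1 j, c n i * X n i ω|) > ε}).toReal)
      atTop (nhds 0) := by
  intro ε hε
  simp only [← measureReal_def] at hG hGhat ⊢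
  obtain ⟨C₀, hC₀⟩ := hbO
  obtain ⟨C, hC⟩ := hAbd
  have hmono : MonotoneOn b (Ici 1) := fun m hm n _ hmn => hbmono m n hm hmn
  set T : ℕ → ℝ := fun n => ∑ k ∈ Finset.Ico 1 n, (b (k + 1) - b k) * Ghat (b k)
  have hGhat0 : ∀ x, 0 ≤ Ghat x := fun x => (hGhat x).symm ▸ Real.iSup_nonneg fun n =>
    Finset.sum_nonneg fun i _ => mul_nonneg (div_nonneg (hc n i) (hA n ▸
      Finset.sum_nonneg fun j _ => hc n j)) measureReal_nonneg
  have hbound : ∀ n ≥ 1, μ.real {ω | (1 / b n) *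
      (Finset.range (n + 1)).sup' Finset.nonempty_range_add_one
        (fun j => |∑ i ∈ Finset.Icc 1 j, c n i * X n i ω|) > ε} ≤
      n * G (b n) + C / ε * (n / b n * (b 1 + T n)) := by
    intro n hn
    have hbn := hbpos n hn
    have hTn : 0 ≤ b 1 + T n := add_nonneg (hbpos 1 le_rfl).le <| Finset.sum_nonneg fun k hk =>
      mul_nonneg (sub_nonneg.mpr (hmono (mem_Ici.mpr (Finset.mem_Ico.mp hk).1)
        (mem_Ici.mpr (by simp)) (by omega))) (hGhat0 _)
    simp only [gt_iff_lt, one_div_mul_eq_div, lt_div_iff₀ hbn]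
    calc _ ≤ ∑ i ∈ Finset.Icc 1 n, μ.real {ω | |X n i ω| > b n} +
          (∑ i ∈ Finset.Icc 1 n, c n i * ∫ ω, min |X n i ω| (b n) ∂μ) / (ε * b n) :=
          measureReal_lt_sup'_abs_sum_le (hXmeas n) (hc n) n (by positivity) hbn.le
      _ ≤ n * G (b n) + A n * (b 1 + T n) / (ε * b n) := by
          gcongr
          · rw [hG]
            exact sum_measureReal_le_mul_iSup (fun m i => {ω | |X m i ω| > b n}) n
          · rw [hA n]
            refine sum_mul_integral_min_abs_le (hXmeas n) (hc n) hmono hn fun k => ?_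
            rw [← hA n, hGhat]
            exact sum_mul_measureReal_le_mul_iSup (fun m i => {ω | |X m i ω| > b k}) hc hA
              (hApos n hn)
      _ ≤ n * G (b n) + C * n * (b 1 + T n) / (ε * b n) := by grw [hC n hn]
      _ = n * G (b n) + C / ε * (n / b n * (b 1 + T n)) := by field_simp
  have hlim := ((tendsto_natCast_div_of_sum_div_sq_le hbpos hC₀).mul_const (b 1)).add
    (tendsto_div_mul_sum_Ico_sub_mul hbpos hmono hC₀ hGhatb)
  refine squeeze_zero' (Eventually.of_forall fun n => measureReal_nonneg)
    (eventually_atTop.mpr ⟨1, hbound⟩) ?_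
  simpa [mul_add] using hGb.add (hlim.const_mul (C / ε))
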